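/- If 𝔄 is a family of equivalence structures with no infinite classes and 𝔄 has only finitely many isomorphism types, then 𝔄 is InfEx_≅-learnable if and only if every two-element subfamily {A, B} ⊆ 𝔄 is InfEx_≅-learnable. -/

import Mathlib

open Set

/-- An equivalence structure on ℕ. -/
structure EqStruct where
  rel : ℕ → ℕ → Prop
  equiv : Equivalence rel

namespace EqStruct

/-- Isomorphism of equivalence structures. -/
def Isom (A B : EqStruct) : Prop :=
  ∃ f : ℕ → ℕ, Function.Bijective f ∧ ∀ x y, A.rel x y ↔ B.rel (f x) (f y)

/-- Embedding of equivalence structures. -/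
def Embeds (A B : EqStruct) : Prop :=
  ∃ f : ℕ → ℕ, Function.Injective f ∧ ∀ x y, A.rel x y ↔ B.rel (f x) (f y)

/-- Bi-embeddability. -/
def Biembed (A B : EqStruct) : Prop := A.Embeds B ∧ B.Embeds A

/-- The equivalence class of `x`. -/
def classOf (A : EqStruct) (x : ℕ) : Set ℕ := {y | A.rel x y}

/-- The number of equivalence classes of size `k` (counted in `ℕ∞`). -/
noncomputable def numClasses (A : EqStruct) (k : ℕ∞) : ℕ∞ :=
  {C : Set ℕ | (∃ x, C = A.classOf x) ∧ C.encard = k}.encard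

/-- `A` finitely embeds into `B`: every finite substructure `A[s]` embeds into `B`. -/
def FinEmbeds (A B : EqStruct) : Prop :=
  ∀ s : ℕ, ∃ f : ℕ → ℕ, Set.InjOn f (Set.Iio s) ∧
    ∀ x < s, ∀ y < s, (A.rel x y ↔ B.rel (f x) (f y))

end EqStruct

/-- An informant for a structure: lists every pair, labelled correctly. -/
def IsInformant (A : EqStruct) (I : ℕ → (ℕ × ℕ) × Bool) : Prop :=
  (∀ p : ℕ × ℕ, ∃ n, (I n).1 = p) ∧
  (∀ n, ((I n).2 = true ↔ A.rel (I n).1.1 (I n).1.2))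

/-- A learner from informants: `none` is the `?` symbol. -/
abbrev Learner := List ((ℕ × ℕ) × Bool) → Option ℕ

/-- The initial segment `I[n]`. -/
def seg (I : ℕ → (ℕ × ℕ) × Bool) (n : ℕ) : List ((ℕ × ℕ) × Bool) :=
  (List.range n).map I

/-- `M` InfEx-learns `A` up to `sim`, with hypotheses indices into `Me`. -/
def InfExLearns (Me : ℕ → EqStruct) (sim : EqStruct → EqStruct → Prop)
    (M : Learner) (A : EqStruct) : Prop :=
  ∀ B, B.Isom A → ∀ I, IsInformant B I →
    ∃ e, sim (Me e) B ∧ ∃ N, ∀ n ≥ N, M (seg I n) = some e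

/-- `M` finitely learns `A` from informants up to `sim`. -/
def InfFinLearns (Me : ℕ → EqStruct) (sim : EqStruct → EqStruct → Prop)
    (M : Learner) (A : EqStruct) : Prop :=
  ∀ B, B.Isom A → ∀ I, IsInformant B I →
    ∃ e, sim (Me e) B ∧ (∃ n, M (seg I n) = some e) ∧
      ∀ n e', M (seg I n) = some e' → e' = e

/-- A text for a structure: enumerates exactly the related pairs (`none` is pause). -/
def IsText (A : EqStruct) (T : ℕ → Option (ℕ × ℕ)) : Prop :=
  ∀ x y, A.rel x y ↔ ∃ n, T n = some (x, y)

/-- A learner from texts. -/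
abbrev TxtLearner := List (Option (ℕ × ℕ)) → Option ℕ

/-- The initial segment `T[n]` of a text. -/
def tseg (T : ℕ → Option (ℕ × ℕ)) (n : ℕ) : List (Option (ℕ × ℕ)) :=
  (List.range n).map T

/-- `M` TxtEx-learns `A` up to `sim`. -/
def TxtExLearns (Me : ℕ → EqStruct) (sim : EqStruct → EqStruct → Prop)
    (M : TxtLearner) (A : EqStruct) : Prop :=
  ∀ B, B.Isom A → ∀ T, IsText B T →
    ∃ e, sim (Me e) B ∧ ∃ N, ∀ n ≥ N, M (tseg T n) = some e

/-- `σ` describes a finite part of `A`: it is an initial segment of an informant for `A`. -/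
def DescribesPart (A : EqStruct) (σ : List ((ℕ × ℕ) × Bool)) : Prop :=
  ∃ I, IsInformant A I ∧ σ = seg I σ.length

/-!
Learnability up to `≅` only depends on the isomorphism types of a family, so it suffices to learn
a finite set `S` of representatives. Given learners `M A A'` for each pair of representatives, call
`A ∈ S` a candidate on input `σ` when every `M A A'` currently conjectures a copy of `A`. Along an
informant for a copy `B` of `A₀ ∈ S`, the candidates are eventually exactly the representatives
isomorphic to `B`: for `A ≇ B` the learner `M A A₀` converges to a copy of `B`, not of `A`. The
combined learner follows `M A A` for a canonically chosen candidate `A`, which is eventually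
constant.
-/

open Filter

namespace EqStruct

instance : Inhabited EqStruct := ⟨⟨Eq, eq_equivalence⟩⟩

theorem Isom.symm {A B : EqStruct} (h : A.Isom B) : B.Isom A := by
  obtain ⟨f, hf, hrel⟩ := h
  obtain ⟨g, hgf, hfg⟩ := Function.bijective_iff_has_inverse.mp hf
  refine ⟨g, Function.bijective_iff_has_inverse.mpr ⟨f, hfg, hgf⟩, fun x y => ?_⟩
  rw [hrel (g x) (g y), hfg x, hfg y]

theorem Isom.trans {A B C : EqStruct} (h₁ : A.Isom B) (h₂ : B.Isom C) : A.Isom C := by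
  obtain ⟨f, hf, hrf⟩ := h₁
  obtain ⟨g, hg, hrg⟩ := h₂
  exact ⟨g ∘ f, hg.comp hf, fun x y => (hrf x y).trans (hrg (f x) (f y))⟩

theorem exists_finite_subset_isom_representatives {𝔄 : Set EqStruct}
    (hfin : ∃ T : Set EqStruct, T.Finite ∧ ∀ A ∈ 𝔄, ∃ C ∈ T, A.Isom C) :
    ∃ S ⊆ 𝔄, S.Finite ∧ ∀ A ∈ 𝔄, ∃ C ∈ S, A.Isom C := by
  obtain ⟨T, hT, hrep⟩ := hfin
  choose! f hfT hf using hrep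
  set g := Function.invFunOn f 𝔄
  refine ⟨g '' (f '' 𝔄), ?_, (hT.subset (image_subset_iff.2 hfT)).image g, fun A hA => ?_⟩
  · rintro _ ⟨_, ⟨A, hA, rfl⟩, rfl⟩
    exact Function.invFunOn_mem ⟨A, hA, rfl⟩
  · have hgA : g (f A) ∈ 𝔄 := Function.invFunOn_mem ⟨A, hA, rfl⟩
    have hfgA : f (g (f A)) = f A := Function.invFunOn_eq ⟨A, hA, rfl⟩
    refine ⟨g (f A), mem_image_of_mem g (mem_image_of_mem f hA), ?_⟩
    have hCg := (hf _ hgA).symm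
    rw [hfgA] at hCg
    exact (hf A hA).trans hCg

end EqStruct

open EqStruct

section Learning

variable {Me : ℕ → EqStruct} {M : Learner}

theorem InfExLearns.of_isom {X Y : EqStruct} (hXY : X.Isom Y)
    (h : InfExLearns Me Isom M Y) : InfExLearns Me Isom M X :=
  fun B hB I hI => h B (hB.trans hXY) I hI

theorem InfExLearns.eventually_eq {A B : EqStruct} (h : InfExLearns Me Isom M A)
    (hB : B.Isom A) {I : ℕ → (ℕ × ℕ) × Bool} (hI : IsInformant B I) :
    ∃ e, (Me e).Isom B ∧ ∀ᶠ n in atTop, M (seg I n) = some e := by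
  obtain ⟨e, he, hconv⟩ := h B hB I hI
  exact ⟨e, he, eventually_atTop.2 hconv⟩

end Learning

section PairwiseLearner

variable (Me : ℕ → EqStruct) (S : Set EqStruct) (Mp : EqStruct → EqStruct → Learner)

def pairCandidates (σ : List ((ℕ × ℕ) × Bool)) : Set EqStruct :=
  {A ∈ S | ∀ A' ∈ S, ∃ e, Mp A A' σ = some e ∧ (Me e).Isom A}

noncomputable def pairwiseLearner : Learner := fun σ =>
  Mp (Classical.epsilon (· ∈ pairCandidates Me S Mp σ))
    (Classical.epsilon (· ∈ pairCandidates Me S Mp σ)) σ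

variable {Me S Mp}
variable (hMp : ∀ A ∈ S, ∀ A' ∈ S,
    InfExLearns Me Isom (Mp A A') A ∧ InfExLearns Me Isom (Mp A A') A')
variable {B : EqStruct} {I : ℕ → (ℕ × ℕ) × Bool} (hI : IsInformant B I)
include hMp hI

theorem eventually_mem_pairCandidates (hS : S.Finite) {A : EqStruct} (hA : A ∈ S)
    (hAB : A.Isom B) : ∀ᶠ n in atTop, A ∈ pairCandidates Me S Mp (seg I n) := by
  refine (hS.eventually_all.2 fun A' hA' => ?_).mono fun n hn => ⟨hA, hn⟩
  obtain ⟨e, he, hconv⟩ := (hMp A hA A' hA').1.eventually_eq hAB.symm hI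
  exact hconv.mono fun n hn => ⟨e, hn, he.trans hAB.symm⟩

theorem eventually_not_mem_pairCandidates {A A₀ : EqStruct} (hA : A ∈ S) (hA₀ : A₀ ∈ S)
    (hBA₀ : B.Isom A₀) (hAB : ¬A.Isom B) :
    ∀ᶠ n in atTop, A ∉ pairCandidates Me S Mp (seg I n) := by
  obtain ⟨e, he, hconv⟩ := (hMp A hA A₀ hA₀).2.eventually_eq hBA₀ hI
  filter_upwards [hconv] with n hn hmem
  obtain ⟨e', he', hiso⟩ := hmem.2 A₀ hA₀
  obtain rfl : e' = e := Option.some_injective _ (he'.symm.trans hn)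
  exact hAB (hiso.symm.trans he)

theorem eventually_pairCandidates_eq (hS : S.Finite) {A₀ : EqStruct} (hA₀ : A₀ ∈ S)
    (hBA₀ : B.Isom A₀) :
    ∀ᶠ n in atTop, pairCandidates Me S Mp (seg I n) = {A ∈ S | A.Isom B} := by
  have hiff : ∀ A ∈ S, ∀ᶠ n in atTop, (A ∈ pairCandidates Me S Mp (seg I n) ↔ A.Isom B) := by
    intro A hA
    by_cases hAB : A.Isom B
    · exact (eventually_mem_pairCandidates hMp hI hS hA hAB).mono fun n hn => iff_of_true hn hAB
    · exact (eventually_not_mem_pairCandidates hMp hI hA hA₀ hBA₀ hAB).mono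
        fun n hn => iff_of_false hn hAB
  filter_upwards [hS.eventually_all.2 hiff] with n hn
  ext A
  exact ⟨fun hA => ⟨hA.1, (hn A hA.1).1 hA⟩, fun hA => (hn A hA.1).2 hA.2⟩

omit hI in
theorem pairwiseLearner_infExLearns (hS : S.Finite) {A₀ : EqStruct} (hA₀ : A₀ ∈ S) :
    InfExLearns Me Isom (pairwiseLearner Me S Mp) A₀ := by
  intro B hBA₀ I hI
  set A := Classical.epsilon (· ∈ {A ∈ S | A.Isom B})
  have hA : A ∈ S ∧ A.Isom B :=
    Classical.epsilon_spec (p := (· ∈ {A ∈ S | A.Isom B})) ⟨A₀, hA₀, hBA₀.symm⟩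
  obtain ⟨e, he, hconv⟩ := (hMp A hA.1 A hA.1).1.eventually_eq hA.2.symm hI
  refine ⟨e, he, eventually_atTop.1 ?_⟩
  filter_upwards [eventually_pairCandidates_eq hMp hI hS hA₀ hBA₀, hconv] with n hcand hn
  rwa [pairwiseLearner, hcand]

end PairwiseLearner

theorem stmt13_general (Me : ℕ → EqStruct) (𝔄 : Set EqStruct)
    (hfin : ∃ T : Set EqStruct, T.Finite ∧ ∀ A ∈ 𝔄, ∃ C ∈ T, A.Isom C) :
    (∃ M : Learner, ∀ A ∈ 𝔄, InfExLearns Me EqStruct.Isom M A) ↔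
      (∀ A ∈ 𝔄, ∀ B ∈ 𝔄, ∃ M : Learner,
        InfExLearns Me EqStruct.Isom M A ∧ InfExLearns Me EqStruct.Isom M B) := by
  refine ⟨fun ⟨M, hM⟩ A hA B hB => ⟨M, hM A hA, hM B hB⟩, fun hpair => ?_⟩
  obtain ⟨S, hS𝔄, hS, hrep⟩ := exists_finite_subset_isom_representatives hfin
  choose! Mp hMp using fun A (hA : A ∈ S) B (hB : B ∈ S) => hpair A (hS𝔄 hA) B (hS𝔄 hB)
  refine ⟨pairwiseLearner Me S Mp, fun A hA => ?_⟩
  obtain ⟨C, hC, hAC⟩ := hrep A hA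
  exact (pairwiseLearner_infExLearns hMp hS hC).of_isom hAC

/-- for a family with no infinite classes and finitely many isomorphism
types, learnability is equivalent to pairwise learnability. -/
theorem stmt13 (Me : ℕ → EqStruct) (𝔄 : Set EqStruct)
    (hnoinf : ∀ A ∈ 𝔄, ∀ x, (A.classOf x).Finite)
    (hfin : ∃ T : Set EqStruct, T.Finite ∧ ∀ A ∈ 𝔄, ∃ C ∈ T, A.Isom C) :
    (∃ M : Learner, ∀ A ∈ 𝔄, InfExLearns Me EqStruct.Isom M A) ↔
      (∀ A ∈ 𝔄, ∀ B ∈ 𝔄, ∃ M : Learner,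
        InfExLearns Me EqStruct.Isom M A ∧ InfExLearns Me EqStruct.Isom M B) :=
  stmt13_general Me 𝔄 hfin
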